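/- Fix integers n ≥ 2 and 1 ≤ d < n. Let 1 ≤ k ≤ n and let v ∈ Λ^k ℝ^{n+1} be a decomposable vector, i.e. v = v_1 ∧ … ∧ v_k for some v_1,…,v_k ∈ ℝ^{n+1}. Then for every 1 ≤ l ≤ d: ‖π_{l+1}(v)‖ · ‖π_0(v)‖ ≤ k · ‖π_l(v)‖ · ‖π_1(v)‖, where π_i is taken to be 0 whenever i lies outside the range max{0, k+d−n} ≤ i ≤ min{d+1, k}. -/

import Mathlib

open Matrix MeasureTheory Filter
open scoped ENNReal NNReal

noncomputable section

/-! ## Exterior powers in coordinates -/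

/-- Index set for the standard wedge basis of Λ^k ℝ^m : k-element subsets of {0,…,m−1}. -/
abbrev Idx (m k : ℕ) := {J : Finset (Fin m) // J.card = k}

/-- Model for the k-th exterior power of ℝ^m, with its sup norm w.r.t. the wedge basis. -/
abbrev Lam (m k : ℕ) := Idx m k → ℝ

/-- Increasing enumeration of a k-element subset of Fin m. -/
def finsetEmb {m k : ℕ} (J : Idx m k) : Fin k → Fin m := fun a => (J.1.orderIsoOfFin J.2 a : Fin m)

/-- Action of an m×m matrix on the k-th exterior power, in the standard wedge basis
(given by the k×k minors). -/
def extPow {m k : ℕ} (g : Matrix (Fin m) (Fin m) ℝ) (v : Lam m k) : Lam m k :=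
  fun J => ∑ K : Idx m k, (g.submatrix (finsetEmb J) (finsetEmb K)).det * v K

/-- The wedge product v₁ ∧ ⋯ ∧ v_k of k vectors in ℝ^m, in coordinates. -/
def wedge {m k : ℕ} (vs : Fin k → (Fin m → ℝ)) : Lam m k :=
  fun J => (Matrix.of fun a b : Fin k => vs b (finsetEmb J a)).det

/-- The wedge product of k integer vectors. -/
def wedgeInt {m k : ℕ} (vs : Fin k → (Fin m → ℤ)) : Lam m k :=
  wedge (fun j i => (vs j i : ℝ))

/-- The projection π_i of Λ^k ℝ^m onto the span of the wedges e_J having exactly i factors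
among e_0,…,e_d (zero if i is out of range). -/
def proj (d : ℕ) {m k : ℕ} (i : ℕ) (v : Lam m k) : Lam m k :=
  fun J => if (J.1.filter (fun x : Fin m => (x : ℕ) ≤ d)).card = i then v J else 0

/-- The projection π₊ of Λ^k ℝ^{d+1} onto the span of the wedges e_J with 0 ∈ J. -/
def projPlus {d k : ℕ} (v : Lam (d+1) k) : Lam (d+1) k :=
  fun J => if (0 : Fin (d+1)) ∈ J.1 then v J else 0

/-- The projection π₋ of Λ^k ℝ^{d+1} onto the span of the wedges e_J with 0 ∉ J. -/
def projMinus {d k : ℕ} (v : Lam (d+1) k) : Lam (d+1) k :=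
  fun J => if (0 : Fin (d+1)) ∉ J.1 then v J else 0

/-! ## The homogeneous space X = SL_{n+1}(ℝ)/SL_{n+1}(ℤ) -/

noncomputable instance SLtop (m : ℕ) : TopologicalSpace (Matrix.SpecialLinearGroup (Fin m) ℝ) :=
  TopologicalSpace.induced (fun g => (g : Matrix (Fin m) (Fin m) ℝ)) inferInstance

abbrev SLn (m : ℕ) := Matrix.SpecialLinearGroup (Fin m) ℝ

/-- Γ = SL_m(ℤ) viewed as a subgroup of SL_m(ℝ). -/
def Gamma (m : ℕ) : Subgroup (SLn m) :=
  (Matrix.SpecialLinearGroup.map (n := Fin m) (Int.castRingHom ℝ)).range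

/-- The space X = SL_m(ℝ)/SL_m(ℤ). -/
abbrev Xsp (m : ℕ) := SLn m ⧸ Gamma m

/-! ## Matrices and one-parameter subgroups -/

lemma det_upperTri {m : ℕ} (M : Matrix (Fin m) (Fin m) ℝ)
    (hoff : ∀ i j : Fin m, (j : ℕ) < (i : ℕ) → M i j = 0)
    (hdiag : ∀ i, M i i = 1) : M.det = 1 := by
  have hbt : M.BlockTriangular id := fun i j hij => hoff i j hij
  rw [Matrix.det_of_upperTriangular hbt]
  simp [hdiag]

/-- u(s): the identity matrix with s₁,…,s_d placed in the first row (columns 1,…,d). -/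
def uMat (n d : ℕ) (s : Fin d → ℝ) : Matrix (Fin (n+1)) (Fin (n+1)) ℝ :=
  Matrix.of fun i j =>
    if i = j then 1
    else if h : i = 0 ∧ 1 ≤ (j : ℕ) ∧ (j : ℕ) ≤ d then s ⟨(j : ℕ) - 1, by omega⟩ else 0

/-- u(s) as an element of SL_{n+1}(ℝ). -/
def uSL (n d : ℕ) (s : Fin d → ℝ) : SLn (n+1) :=
  ⟨uMat n d s, det_upperTri _ (fun i j hij => by
      simp only [uMat, Matrix.of_apply]
      rw [if_neg (by rintro rfl; omega), dif_neg (by rintro ⟨rfl, h1, h2⟩; simp at hij)])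
    (fun i => by simp [uMat])⟩

/-- u(x): the identity matrix with x ∈ ℝ^n placed in the first row. -/
def uxMat (n : ℕ) (x : Fin n → ℝ) : Matrix (Fin (n+1)) (Fin (n+1)) ℝ :=
  Matrix.of fun i j =>
    if i = j then 1
    else if h : i = 0 ∧ 1 ≤ (j : ℕ) then x ⟨(j : ℕ) - 1, by have := j.isLt; omega⟩ else 0

/-- u(x) as an element of SL_{n+1}(ℝ). -/
def uxSL (n : ℕ) (x : Fin n → ℝ) : SLn (n+1) :=
  ⟨uxMat n x, det_upperTri _ (fun i j hij => by
      simp only [uxMat, Matrix.of_apply]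
      rw [if_neg (by rintro rfl; omega), dif_neg (by rintro ⟨rfl, h1⟩; simp at hij)])
    (fun i => by simp [uxMat])⟩

/-- u_A: the block unipotent matrix with I_{d+1}, I_{n−d} on the diagonal and A in the
upper-right block. -/
def uAMat (n d : ℕ) (A : Matrix (Fin (d+1)) (Fin (n-d)) ℝ) : Matrix (Fin (n+1)) (Fin (n+1)) ℝ :=
  Matrix.of fun i j =>
    if i = j then 1
    else if h : (i : ℕ) ≤ d ∧ d + 1 ≤ (j : ℕ) then
      A ⟨(i : ℕ), by omega⟩ ⟨(j : ℕ) - (d+1), by have := j.isLt; omega⟩ else 0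

/-- u_A as an element of SL_{n+1}(ℝ). -/
def uASL (n d : ℕ) (A : Matrix (Fin (d+1)) (Fin (n-d)) ℝ) : SLn (n+1) :=
  ⟨uAMat n d A, det_upperTri _ (fun i j hij => by
      simp only [uAMat, Matrix.of_apply]
      rw [if_neg (by rintro rfl; omega), dif_neg (by rintro ⟨h1, h2⟩; omega)])
    (fun i => by simp [uAMat])⟩

lemma sum_ite_fin (m k : ℕ) (hk : k ≤ m) (a b : ℝ) :
    (∑ i : Fin m, if (i : ℕ) < k then a else b) = k * a + ((m - k : ℕ) : ℝ) * b := by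
  rw [Fin.sum_univ_eq_sum_range (fun i => if i < k then a else b) m]
  rw [Finset.range_eq_Ico, ← Finset.sum_Ico_consecutive _ (Nat.zero_le k) hk]
  rw [Finset.sum_congr rfl (fun i hi => if_pos (Finset.mem_Ico.mp hi).2),
    Finset.sum_congr rfl (g := fun _ => b)
      (fun i hi => if_neg (Nat.not_lt.mpr (Finset.mem_Ico.mp hi).1))]
  simp [Nat.card_Ico, mul_comm]

/-- A diagonal matrix with entries exp (f i), as an element of SL_m(ℝ). -/
def diagSL (m : ℕ) (f : Fin m → ℝ) (h : ∑ i, f i = 0) : SLn m :=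
  ⟨Matrix.diagonal fun i => Real.exp (f i), by
    rw [Matrix.det_diagonal, ← Real.exp_sum, h, Real.exp_zero]⟩

/-- b_t = diag(e^{(n−d)t/((d+1)(n+1))}·I_{d+1}, e^{−t/(n+1)}·I_{n−d}) ∈ SL_{n+1}(ℝ). -/
def btSL (n d : ℕ) (h : d ≤ n) (t : ℝ) : SLn (n+1) :=
  diagSL (n+1)
    (fun i => if (i : ℕ) < d + 1 then ((n : ℝ) - (d : ℝ)) * t / (((d : ℝ) + 1) * ((n : ℝ) + 1))
      else -t / ((n : ℝ) + 1))
    (by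
      rw [sum_ite_fin (n+1) (d+1) (by omega)]
      have h1 : ((n + 1 - (d + 1) : ℕ) : ℝ) = (n : ℝ) - (d : ℝ) := by
        have h2 : (n + 1 - (d + 1) : ℕ) = n - d := by omega
        rw [h2, Nat.cast_sub h]
      rw [h1]
      have hd1 : ((d : ℝ) + 1) ≠ 0 := by positivity
      have hn1 : ((n : ℝ) + 1) ≠ 0 := by positivity
      field_simp
      push_cast
      ring)

/-- c_t = diag(e^{dt/(d+1)}, e^{−t/(d+1)}·I_d, I_{n−d}) ∈ SL_{n+1}(ℝ). -/
def ctSL (n d : ℕ) (h : d ≤ n) (t : ℝ) : SLn (n+1) :=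
  diagSL (n+1)
    (fun i => if (i : ℕ) = 0 then (d : ℝ) * t / ((d : ℝ) + 1)
      else if (i : ℕ) < d + 1 then -t / ((d : ℝ) + 1) else 0)
    (by
      rw [Fin.sum_univ_succ]
      simp only [Fin.val_zero, if_pos rfl, Fin.val_succ]
      have key : ∀ i : Fin n,
          (if (i : ℕ) + 1 = 0 then (d : ℝ) * t / ((d : ℝ) + 1)
            else if (i : ℕ) + 1 < d + 1 then -t / ((d : ℝ) + 1) else 0)
          = (if (i : ℕ) < d then -t / ((d : ℝ) + 1) else 0) := by
        intro i
        rw [if_neg (by omega)]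
        by_cases hc : (i : ℕ) < d
        · rw [if_pos (by omega), if_pos hc]
        · rw [if_neg (by omega), if_neg hc]
      rw [Finset.sum_congr rfl fun i _ => key i, sum_ite_fin n d h]
      have hd1 : ((d : ℝ) + 1) ≠ 0 := by positivity
      field_simp
      rw [if_pos trivial]
      field_simp
      try ring)

/-- g_t = diag(e^{nt/(n+1)}, e^{−t/(n+1)}·I_n) ∈ SL_{n+1}(ℝ). -/
def gtSL (n : ℕ) (t : ℝ) : SLn (n+1) :=
  diagSL (n+1)
    (fun i => if (i : ℕ) = 0 then (n : ℝ) * t / ((n : ℝ) + 1) else -t / ((n : ℝ) + 1))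
    (by
      rw [Fin.sum_univ_succ]
      simp only [Fin.val_zero, if_pos rfl, Fin.val_succ]
      have key : ∀ i : Fin n,
          (if (i : ℕ) + 1 = 0 then (n : ℝ) * t / ((n : ℝ) + 1) else -t / ((n : ℝ) + 1))
          = -t / ((n : ℝ) + 1) := fun i => if_neg (by omega)
      rw [Finset.sum_congr rfl fun i _ => key i, Finset.sum_const, Finset.card_univ,
        Fintype.card_fin, nsmul_eq_mul]
      have hn1 : ((n : ℝ) + 1) ≠ 0 := by positivity
      field_simp
      rw [if_pos trivial]
      field_simp
      try ring)

/-- c_t = diag(e^{dt/(d+1)}, e^{−t/(d+1)}·I_d) as a (d+1)×(d+1) matrix. -/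
def ctMat1 (d : ℕ) (t : ℝ) : Matrix (Fin (d+1)) (Fin (d+1)) ℝ :=
  Matrix.diagonal fun i =>
    if (i : ℕ) = 0 then Real.exp ((d : ℝ) * t / ((d : ℝ) + 1))
    else Real.exp (-t / ((d : ℝ) + 1))

/-- c_t = diag(e^{dt/(d+1)}, e^{−t/(d+1)}·I_d, I_{n−d}) as an (n+1)×(n+1) matrix. -/
def ctMatN (n d : ℕ) (t : ℝ) : Matrix (Fin (n+1)) (Fin (n+1)) ℝ :=
  Matrix.diagonal fun i =>
    if (i : ℕ) = 0 then Real.exp ((d : ℝ) * t / ((d : ℝ) + 1))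
    else if (i : ℕ) < d + 1 then Real.exp (-t / ((d : ℝ) + 1)) else 1

/-- The identification Fin (n+1) ≃ Fin (d+1) ⊕ Fin (n−d). -/
def finSplit (n d : ℕ) (h : d ≤ n) : Fin (n+1) ≃ Fin (d+1) ⊕ Fin (n-d) :=
  (finCongr (by omega)).trans finSumFinEquiv.symm

/-- The embedding SL_{d+1}(ℝ) → SL_{n+1}(ℝ), h ↦ diag(h, I_{n−d}); its image is the
subgroup H of the paper. -/
def embedSL (n d : ℕ) (h : d ≤ n) (g : Matrix.SpecialLinearGroup (Fin (d+1)) ℝ) : SLn (n+1) :=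
  ⟨Matrix.reindex (finSplit n d h).symm (finSplit n d h).symm
      (Matrix.fromBlocks (g : Matrix (Fin (d+1)) (Fin (d+1)) ℝ) 0 0
        (1 : Matrix (Fin (n-d)) (Fin (n-d)) ℝ)), by
    rw [Matrix.det_reindex_self, Matrix.det_fromBlocks_zero₂₁, Matrix.det_one, mul_one]
    exact g.2⟩

/-! ## Height functions and exponents -/

/-- The cube I^d = [−1/2, 1/2]^d. -/
def Icube (d : ℕ) : Set (Fin d → ℝ) := Set.univ.pi fun _ => Set.Icc (-(1/2) : ℝ) (1/2)

/-- The function φ_ε on Λ^k ℝ^{n+1}, with values in [0,∞] (here δ_k = (n+1−k)k). -/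
def phiFn (n d k : ℕ) (ε : ℝ) (v : Lam (n+1) k) : ℝ≥0∞ :=
  if ‖proj d 0 v + proj d (d+1) v‖ < ε ^ ((n + 1 - k) * k) then
    ⨅ i ∈ Finset.Icc 1 d,
      ENNReal.ofReal
          (ε ^ ((((d : ℝ) + 1) / (((d : ℝ) + 1) - (i : ℝ))) * (((n + 1 - k) * k : ℕ) : ℝ)))
        * ENNReal.ofReal ‖proj d i v‖ ^ (-(((d : ℝ) + 1) / (((d : ℝ) + 1) - (i : ℝ))))
  else 0

/-- v ∈ Λ^k ℝ^{n+1} is a y-integral vector: v = g(v₁ ∧ ⋯ ∧ v_k) for a representative g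
of y and linearly independent integer vectors v₁,…,v_k. -/
def IsIntegralVec (n : ℕ) {k : ℕ} (y : Xsp (n+1)) (v : Lam (n+1) k) : Prop :=
  ∃ g : SLn (n+1), (QuotientGroup.mk g : Xsp (n+1)) = y ∧
    ∃ w : Fin k → (Fin (n+1) → ℤ), LinearIndependent ℤ w ∧
      v = extPow (g : Matrix (Fin (n+1)) (Fin (n+1)) ℝ) (wedgeInt w)

/-- The Margulis height function α_ε^θ on X. -/
def alphaF (n d : ℕ) (ε θ : ℝ) (y : Xsp (n+1)) : ℝ≥0∞ :=
  ⨆ k ∈ Finset.Icc 1 n, ⨆ v : Lam (n+1) k, ⨆ _ : v ≠ 0 ∧ IsIntegralVec n y v, phiFn n d k ε v ^ θ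

/-- The dynamical exponent ρ(y; b_t, α) = limsup_{t→∞} log α(b_t y) / t ∈ [−∞,∞]. -/
def rhoExp (n d : ℕ) (h : d ≤ n) (α : Xsp (n+1) → ℝ≥0∞) (y : Xsp (n+1)) : EReal :=
  Filter.limsup (fun t : ℝ => ENNReal.log (α (btSL n d h t • y)) / (t : EReal)) Filter.atTop

/-- α̃_δ(y) = ∫₀^∞ e^{−δt} α(b_t y) dt. -/
def atilde (n d : ℕ) (h : d ≤ n) (δ : ℝ) (α : Xsp (n+1) → ℝ≥0∞) (y : Xsp (n+1)) : ℝ≥0∞ :=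
  ∫⁻ t in Set.Ioi (0 : ℝ), ENNReal.ofReal (Real.exp (-δ * t)) * α (btSL n d h t • y)

/-- α is Lipschitz with respect to the action of H = diag(SL_{d+1}(ℝ), I_{n−d}). -/
def LipschitzWrtH (n d : ℕ) (h : d ≤ n) (α : Xsp (n+1) → ℝ≥0∞) : Prop :=
  ∀ F : Set (SLn (n+1)), F ⊆ Set.range (embedSL n d h) → IsCompact F →
    ∃ C : ℝ, 1 ≤ C ∧ ∀ g ∈ F, ∀ y : Xsp (n+1), α (g • y) ≤ ENNReal.ofReal C * α y

/-- y ∈ X is g_t-divergent on average. -/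
def gDivergentOnAvg (n : ℕ) (y : Xsp (n+1)) : Prop :=
  ∀ K : Set (Xsp (n+1)), IsCompact K →
    Tendsto (fun N : ℕ => ((Set.ncard {l : ℕ | 1 ≤ l ∧ l ≤ N ∧ gtSL n l • y ∈ K} : ℝ) / N))
      atTop (nhds 0)

/-- The set B_x(M,t,m;N) of the paper (for x = y_A and the height function α̃ = α̃_δ). -/
def Bset (n d : ℕ) (h : d ≤ n) (δ : ℝ) (α : Xsp (n+1) → ℝ≥0∞) (yA : Xsp (n+1))
    (M t : ℝ) (m N : ℕ) : Set (Fin d → ℝ) :=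
  {s : Fin d → ℝ | s ∈ Icube d ∧
    atilde n d h δ α ((gtSL n ((m : ℝ) * t) * uSL n d s) • yA) < ENNReal.ofReal M ∧
    ∀ l : ℕ, 1 ≤ l → l ≤ N →
      ENNReal.ofReal M ≤ atilde n d h δ α ((gtSL n (((m : ℝ) + (l : ℝ)) * t) * uSL n d s) • yA)}

/-! ## Diophantine approximation -/

/-- x ∈ ℝ^n is a singular vector. -/
def IsSingular (n : ℕ) (x : Fin n → ℝ) : Prop :=
  ∀ ε : ℝ, 0 < ε → ∃ N₀ : ℝ, ∀ N : ℝ, N₀ ≤ N → ∃ q : Fin n → ℤ, q ≠ 0 ∧ ∃ p : ℤ,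
    |(∑ i, (q i : ℝ) * x i) - (p : ℝ)| ≤ ε * N ^ (-(n : ℝ)) ∧ ‖q‖ ≤ N

/-- The vector (s, s̃A) ∈ ℝ^n, where s̃ = (1, s₁, …, s_d). -/
def xvec (n d : ℕ) (h : d ≤ n) (A : Matrix (Fin (d+1)) (Fin (n-d)) ℝ) (s : Fin d → ℝ) :
    Fin n → ℝ :=
  fun i => Fin.append s (Matrix.vecMul (Fin.cons 1 s) A) (Fin.cast (Nat.add_sub_cancel' h).symm i)

/-- The set of exponents ω for which ‖Aq − p‖ ≤ ‖q‖^{−ω} has infinitely many solutions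
q ∈ ℤ^{n−d} \ {0}, p ∈ ℤ^{d+1}. -/
def diophSet (n d : ℕ) (A : Matrix (Fin (d+1)) (Fin (n-d)) ℝ) : Set ℝ :=
  {ω : ℝ | {qp : (Fin (n-d) → ℤ) × (Fin (d+1) → ℤ) | qp.1 ≠ 0 ∧
    ‖A.mulVec (fun i => (qp.1 i : ℝ)) - (fun i => (qp.2 i : ℝ))‖ ≤ ‖qp.1‖ ^ (-ω)}.Infinite}

/-- The Diophantine exponent ω(A) ∈ [−∞, +∞]. -/
def omegaExp (n d : ℕ) (A : Matrix (Fin (d+1)) (Fin (n-d)) ℝ) : EReal :=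
  sSup (Real.toEReal '' diophSet n d A)


/-! Write `S = {0, …, d}`. Let `J` be a coordinate with `|J ∩ S| = l + 1`, `J'` one with
`J' ∩ S = ∅`, and pick `x ∈ J ∩ S`. The Plücker exchange relation writes `v_J v_{J'}` as a sum
of `k` products `± v_{J - x + y} v_{J' - y + x}`, `y ∈ J'`. The first factor is a coordinate of
`π_l(v)` (or vanishes when `y ∈ J`), the second one a coordinate of `π_1(v)`. -/

lemma mul_norm_le_of_forall_mul_abs_le {ι : Type*} [Fintype ι] {a C : ℝ} (ha : 0 ≤ a)
    (hC : 0 ≤ C) {y : ι → ℝ} (h : ∀ j, a * |y j| ≤ C) : a * ‖y‖ ≤ C := by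
  rw [← Real.norm_of_nonneg ha, ← norm_smul]
  exact (pi_norm_le_iff_of_nonneg hC).2 fun j => by
    simpa [abs_mul, abs_of_nonneg ha] using h j

lemma norm_mul_norm_le_of_forall {ι : Type*} [Fintype ι] {x y : ι → ℝ} {C : ℝ} (hC : 0 ≤ C)
    (h : ∀ i j, |x i| * |y j| ≤ C) : ‖x‖ * ‖y‖ ≤ C := by
  rw [mul_comm]
  refine mul_norm_le_of_forall_mul_abs_le (norm_nonneg y) hC fun i => ?_
  rw [mul_comm]
  exact mul_norm_le_of_forall_mul_abs_le (abs_nonneg _) hC (h i)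

section PluckerInequality

open Finset

theorem Matrix.det_mul_det_eq_sum_det_updateRow {R ι : Type*} [CommRing R] [Fintype ι]
    [DecidableEq ι] (U W : Matrix ι ι R) (i : ι) :
    U.det * W.det = ∑ j, (U.updateRow i (W j)).det * (W.updateRow j (U i)).det := by
  -- By Cramer's rule both families of determinants are entries of adjugates, and the sum
  -- collapses through `Wᵀ * adjugate Wᵀ = det W • 1`.
  have hU : ∀ j, (U.updateRow i (W j)).det = (Uᵀ.adjugate * Wᵀ) i j := fun j => by
    rw [← det_transpose, ← updateCol_transpose, ← cramer_apply, cramer_eq_adjugate_mulVec]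
    simp [mulVec, dotProduct, mul_apply]
  have hW : ∀ j, (W.updateRow j (U i)).det = (Wᵀ.adjugate *ᵥ U i) j := fun j => by
    rw [← det_transpose, ← updateCol_transpose, ← cramer_apply, cramer_eq_adjugate_mulVec]
  simp_rw [hU, hW]
  change _ = ((Uᵀ.adjugate * Wᵀ) *ᵥ (Wᵀ.adjugate *ᵥ U i)) i
  rw [mulVec_mulVec, Matrix.mul_assoc, mul_adjugate, det_transpose, Matrix.mul_smul,
    Matrix.mul_one, smul_mulVec, Pi.smul_apply, smul_eq_mul, ← cramer_eq_adjugate_mulVec,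
    cramer_apply, updateCol_transpose, updateRow_eq_self, det_transpose, mul_comm]

variable {m k : ℕ}

lemma finsetEmb_injective (J : Idx m k) : Function.Injective (finsetEmb J) :=
  (J.1.orderEmbOfFin J.2).injective

lemma image_finsetEmb_univ (J : Idx m k) : univ.image (finsetEmb J) = J.1 :=
  J.1.image_orderEmbOfFin_univ J.2

lemma card_filter_image_of_injective {α β : Type*} [Fintype α] [DecidableEq β] {f : α → β}
    (hf : Function.Injective f) (p : β → Prop) [DecidablePred p] :
    #((univ.image f).filter p) = #{a | p (f a)} := by
  rw [filter_image, card_image_of_injective _ hf]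

lemma card_filter_finsetEmb (J : Idx m k) (p : Fin m → Prop) [DecidablePred p] :
    #{a | p (finsetEmb J a)} = #(J.1.filter p) := by
  rw [← card_filter_image_of_injective (finsetEmb_injective J), image_finsetEmb_univ]

def minor (vs : Fin k → Fin m → ℝ) (h : Fin k → Fin m) : ℝ :=
  (Matrix.of fun a b : Fin k => vs b (h a)).det

lemma wedge_apply (vs : Fin k → Fin m → ℝ) (J : Idx m k) : wedge vs J = minor vs (finsetEmb J) :=
  rfl

lemma minor_comp_perm (vs : Fin k → Fin m → ℝ) (h : Fin k → Fin m) (σ : Equiv.Perm (Fin k)) :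
    minor vs (h ∘ σ) = Equiv.Perm.sign σ * minor vs h :=
  det_permute σ (Matrix.of fun a b : Fin k => vs b (h a))

lemma minor_update (vs : Fin k → Fin m → ℝ) (h : Fin k → Fin m) (a : Fin k) (x : Fin m) :
    minor vs (Function.update h a x) =
      ((Matrix.of fun a b : Fin k => vs b (h a)).updateRow a fun b => vs b x).det := by
  unfold minor
  congr 1
  ext a' b
  by_cases ha : a' = a <;> simp [ha, updateRow_apply]

lemma minor_eq_zero_of_not_injective (vs : Fin k → Fin m → ℝ) {h : Fin k → Fin m}
    (hh : ¬ Function.Injective h) : minor vs h = 0 := by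
  obtain ⟨a, b, hab, hne⟩ : ∃ a b, h a = h b ∧ a ≠ b := by
    simpa [Function.Injective] using hh
  exact det_zero_of_row_eq hne (funext fun c => by simp [hab])

def imageIdx {h : Fin k → Fin m} (hh : Function.Injective h) : Idx m k :=
  ⟨univ.image h, by rw [card_image_of_injective _ hh, card_univ, Fintype.card_fin]⟩

lemma exists_perm_finsetEmb_comp {h : Fin k → Fin m} (hh : Function.Injective h) :
    ∃ σ : Equiv.Perm (Fin k), finsetEmb (imageIdx hh) ∘ σ = h := by
  set J := imageIdx hh
  let σ : Fin k → Fin k := fun a =>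
    (J.1.orderIsoOfFin J.2).symm ⟨h a, mem_image_of_mem h (mem_univ a)⟩
  have hσ : finsetEmb J ∘ σ = h := funext fun a => by simp [σ, finsetEmb]
  have hσinj : Function.Injective σ := fun a b hab => hh (by rw [← hσ]; simp [hab])
  exact ⟨Equiv.ofBijective σ hσinj.bijective_of_finite, hσ⟩

lemma abs_minor_eq_abs_wedge (vs : Fin k → Fin m → ℝ) {h : Fin k → Fin m}
    (hh : Function.Injective h) : |minor vs h| = |wedge vs (imageIdx hh)| := by
  obtain ⟨σ, hσ⟩ := exists_perm_finsetEmb_comp hh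
  conv_lhs => rw [← hσ, minor_comp_perm, abs_mul, abs_unit_intCast, one_mul]
  rfl

lemma minor_mul_minor_eq_sum (vs : Fin k → Fin m → ℝ) (f g : Fin k → Fin m) (i : Fin k) :
    minor vs f * minor vs g =
      ∑ j, minor vs (Function.update f i (g j)) * minor vs (Function.update g j (f i)) := by
  simp only [minor_update]
  exact det_mul_det_eq_sum_det_updateRow _ _ i

lemma abs_minor_le_norm_proj (d : ℕ) (vs : Fin k → Fin m → ℝ) (h : Fin k → Fin m) {i : ℕ}
    (hi : #{a | (h a : ℕ) ≤ d} = i) : |minor vs h| ≤ ‖proj d i (wedge vs)‖ := by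
  by_cases hh : Function.Injective h
  · have hJ : proj d i (wedge vs) (imageIdx hh) = wedge vs (imageIdx hh) :=
      if_pos ((card_filter_image_of_injective hh _).trans hi)
    rw [abs_minor_eq_abs_wedge vs hh, ← hJ, ← Real.norm_eq_abs]
    exact norm_le_pi_norm _ _
  · rw [minor_eq_zero_of_not_injective vs hh, abs_zero]
    exact norm_nonneg _

lemma abs_minor_mul_abs_minor_le (d l : ℕ) (vs : Fin k → Fin m → ℝ) {f g : Fin k → Fin m}
    (hf : #{a | (f a : ℕ) ≤ d} = l + 1) (hg : #{a | (g a : ℕ) ≤ d} = 0) :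
    |minor vs f| * |minor vs g| ≤ k * (‖proj d l (wedge vs)‖ * ‖proj d 1 (wedge vs)‖) := by
  obtain ⟨i, hi⟩ : ∃ i, (f i : ℕ) ≤ d := by
    obtain ⟨i, hi⟩ := card_pos.mp (hf.symm ▸ l.succ_pos : 0 < #{a | (f a : ℕ) ≤ d})
    exact ⟨i, (mem_filter.mp hi).2⟩
  have hg' : ∀ a, d < (g a : ℕ) := by simpa using hg
  have hcard₁ : ∀ j, #{a | (Function.update f i (g j) a : ℕ) ≤ d} = l := fun j => by
    have : ({a | (Function.update f i (g j) a : ℕ) ≤ d} : Finset _) =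
        ({a | (f a : ℕ) ≤ d} : Finset _).erase i := by
      ext a
      by_cases ha : a = i <;> simp [ha, hg' j]
    rw [this, card_erase_of_mem (by simpa using hi), hf, Nat.add_sub_cancel]
  have hcard₂ : ∀ j, #{a | (Function.update g j (f i) a : ℕ) ≤ d} = 1 := fun j => by
    refine card_eq_one.mpr ⟨j, ?_⟩
    ext a
    by_cases ha : a = j <;> simp [ha, hi, hg' a]
  rw [← abs_mul, minor_mul_minor_eq_sum vs f g i]
  calc |∑ j, minor vs (Function.update f i (g j)) * minor vs (Function.update g j (f i))|
      ≤ ∑ j, |minor vs (Function.update f i (g j))| * |minor vs (Function.update g j (f i))| :=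
        (abs_sum_le_sum_abs _ _).trans_eq (sum_congr rfl fun j _ => abs_mul _ _)
    _ ≤ ∑ _j : Fin k, ‖proj d l (wedge vs)‖ * ‖proj d 1 (wedge vs)‖ :=
        sum_le_sum fun j _ => mul_le_mul (abs_minor_le_norm_proj d vs _ (hcard₁ j))
          (abs_minor_le_norm_proj d vs _ (hcard₂ j)) (abs_nonneg _) (norm_nonneg _)
    _ = k * (‖proj d l (wedge vs)‖ * ‖proj d 1 (wedge vs)‖) := by simp

end PluckerInequality

theorem plucker_inequality_general
    (n d : ℕ)
    (k : ℕ)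
    (v : Lam (n+1) k) (hv : ∃ vs : Fin k → (Fin (n+1) → ℝ), v = wedge vs)
    (l : ℕ) :
    ‖proj d (l+1) v‖ * ‖proj d 0 v‖ ≤ (k : ℝ) * (‖proj d l v‖ * ‖proj d 1 v‖) := by
  obtain ⟨vs, rfl⟩ := hv
  refine norm_mul_norm_le_of_forall (by positivity) fun J J' => ?_
  rw [proj, proj]
  split_ifs with hJ hJ'
  · exact abs_minor_mul_abs_minor_le d l vs ((card_filter_finsetEmb J _).trans hJ)
      ((card_filter_finsetEmb J' _).trans hJ')
  all_goals simp only [abs_zero, zero_mul, mul_zero]; positivity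

/-- Plücker-relation inequality for decomposable vectors,
‖π_{l+1}(v)‖·‖π₀(v)‖ ≤ k·‖π_l(v)‖·‖π₁(v)‖. -/
theorem plucker_inequality
    (n d : ℕ) (hn : 2 ≤ n) (hd : 1 ≤ d) (hdn : d < n)
    (k : ℕ) (hk1 : 1 ≤ k) (hkn : k ≤ n)
    (v : Lam (n+1) k) (hv : ∃ vs : Fin k → (Fin (n+1) → ℝ), v = wedge vs)
    (l : ℕ) (hl1 : 1 ≤ l) (hld : l ≤ d) :
    ‖proj d (l+1) v‖ * ‖proj d 0 v‖ ≤ (k : ℝ) * (‖proj d l v‖ * ‖proj d 1 v‖) :=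
  plucker_inequality_general n d k v hv l
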